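/- arXiv:0903.3460 — 5 statements merged into one kernel-verified Lean document; each statement's English description precedes it below -/
import Mathlib

section
/- Let h : [0,1] → ℝ be defined by h(τ) = √(1+τ²)·(π + arcsin τ)/(π/2 − arctan(√(1−τ²)/√(1+τ²))) − τ. Then there exists τ₀ ∈ (0,1) such that h(τ) ≤ h(τ₀) for all τ ∈ [0,1] and h(τ₀) > 4. That is, h attains its maximum h₀ over [0,1] at an interior point, and h₀ > 4. -/
open Real Set

/-- The function `h(τ)` of the paper. -/
noncomputable def hFun (τ : ℝ) : ℝ :=
  Real.sqrt (1 + τ^2) * (π + Real.arcsin τ) /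
    (π/2 - Real.arctan (Real.sqrt (1 - τ^2) / Real.sqrt (1 + τ^2))) - τ

lemma hFun_denom_pos (τ : ℝ) :
    0 < π/2 - Real.arctan (Real.sqrt (1 - τ^2) / Real.sqrt (1 + τ^2)) :=
  sub_pos.mpr (Real.arctan_lt_pi_div_two _)

lemma hFun_continuous : Continuous hFun := by
  unfold hFun
  refine Continuous.sub (Continuous.div ?_ ?_ fun x => (hFun_denom_pos x).ne') continuous_id
  · exact (Real.continuous_sqrt.comp (continuous_const.add (continuous_pow 2))).mul
      (continuous_const.add Real.continuous_arcsin)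
  · exact continuous_const.sub (Real.continuous_arctan.comp
      ((Real.continuous_sqrt.comp (continuous_const.sub (continuous_pow 2))).div
        (Real.continuous_sqrt.comp (continuous_const.add (continuous_pow 2)))
        (fun x => (Real.sqrt_pos.mpr (by positivity)).ne')))

lemma my_arctan_le_self {t : ℝ} (ht : 0 ≤ t) : Real.arctan t ≤ t := by
  have h0 : 0 ≤ Real.arctan t := by
    rw [← Real.arctan_zero]; exact Real.arctan_strictMono.monotone ht
  calc Real.arctan t ≤ Real.tan (Real.arctan t) :=
        Real.le_tan h0 (Real.arctan_lt_pi_div_two t)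
    _ = t := Real.tan_arctan t

lemma my_arctan_upper {x : ℝ} (hx : 1 ≤ x) :
    Real.arctan x ≤ π/4 + (x - 1)/(x + 1) := by
  have hx1 : (0:ℝ) < x + 1 := by linarith
  set t := (x - 1)/(x + 1) with ht_def
  have ht0 : 0 ≤ t := div_nonneg (by linarith) hx1.le
  have htlt : t * 1 < 1 := by
    rw [mul_one, div_lt_one hx1]; linarith
  have hadd := Real.arctan_add htlt
  have harg : (t + 1) / (1 - t * 1) = x := by
    rw [ht_def]; field_simp; ring
  rw [harg, Real.arctan_one] at hadd
  have := my_arctan_le_self ht0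
  linarith

lemma my_arcsin_quarter : (1/4 : ℝ) ≤ Real.arcsin (1/4) := by
  have hpos : 0 < Real.arcsin (1/4 : ℝ) := Real.arcsin_pos.mpr (by norm_num)
  have := Real.sin_lt hpos
  rw [Real.sin_arcsin (by norm_num) (by norm_num)] at this
  linarith

lemma sqrt17_gt : (4.123 : ℝ) < Real.sqrt 17 := by
  have h : (4.123 : ℝ) = Real.sqrt (4.123^2) := (Real.sqrt_sq (by norm_num)).symm
  rw [h]
  exact Real.sqrt_lt_sqrt (by positivity) (by norm_num)

lemma key_quarter : 4 < hFun (1/4) := by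
  have s15pos : (0:ℝ) < Real.sqrt 15 := Real.sqrt_pos.mpr (by norm_num)
  have s17pos : (0:ℝ) < Real.sqrt 17 := Real.sqrt_pos.mpr (by norm_num)
  have h4 : Real.sqrt 16 = 4 := by
    rw [show (16:ℝ) = 4^2 by norm_num, Real.sqrt_sq (by norm_num)]
  have e1 : Real.sqrt (1 - (1/4:ℝ)^2) = Real.sqrt 15 / 4 := by
    rw [show (1 - (1/4:ℝ)^2) = 15/16 by norm_num, Real.sqrt_div (by norm_num) 16, h4]
  have e2 : Real.sqrt (1 + (1/4:ℝ)^2) = Real.sqrt 17 / 4 := by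
    rw [show (1 + (1/4:ℝ)^2) = 17/16 by norm_num, Real.sqrt_div (by norm_num) 16, h4]
  unfold hFun
  rw [e1, e2]
  have e3 : (Real.sqrt 15 / 4) / (Real.sqrt 17 / 4) = Real.sqrt 15 / Real.sqrt 17 := by
    field_simp
  rw [e3]
  have eD : π/2 - Real.arctan (Real.sqrt 15 / Real.sqrt 17)
      = Real.arctan (Real.sqrt 17 / Real.sqrt 15) := by
    rw [show Real.sqrt 17 / Real.sqrt 15 = (Real.sqrt 15 / Real.sqrt 17)⁻¹ by rw [inv_div],
      Real.arctan_inv_of_pos (by positivity)]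
  rw [eD]
  set D := Real.arctan (Real.sqrt 17 / Real.sqrt 15) with hD
  have hx1 : (1:ℝ) ≤ Real.sqrt 17 / Real.sqrt 15 := by
    rw [le_div_iff₀ s15pos, one_mul]
    exact Real.sqrt_le_sqrt (by norm_num)
  have hDpos : 0 < D := by
    rw [hD, ← Real.arctan_zero]
    exact Real.arctan_strictMono (by positivity)
  -- bound the ratio above
  have hratio : Real.sqrt 17 / Real.sqrt 15 < 1.0646 := by
    rw [← Real.sqrt_div (by norm_num) 15]
    rw [show (1.0646:ℝ) = Real.sqrt (1.0646^2) from (Real.sqrt_sq (by norm_num)).symm]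
    exact Real.sqrt_lt_sqrt (by positivity) (by norm_num)
  have hD_ub : D ≤ π/4 + 0.0323 := by
    have h := my_arctan_upper hx1
    have ht : (Real.sqrt 17 / Real.sqrt 15 - 1) / (Real.sqrt 17 / Real.sqrt 15 + 1)
        ≤ 0.0323 := by
      set x := Real.sqrt 17 / Real.sqrt 15
      have h2 : (x - 1)/(x + 1) ≤ (x - 1)/2 :=
        div_le_div_of_nonneg_left (by linarith) (by norm_num) (by linarith)
      have h3 : (x - 1)/2 ≤ 0.0323 := by linarith
      linarith
    linarith
  have hA := my_arcsin_quarter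
  have hs17 := sqrt17_gt
  have hπu : π < 3.15 := by linarith [Real.pi_lt_d2]
  have hπl : (3.14:ℝ) < π := by linarith [Real.pi_gt_d6]
  rw [lt_sub_iff_add_lt, lt_div_iff₀ hDpos]
  have hsum : (3.39:ℝ) < π + Real.arcsin (1/4) := by linarith
  have hmul : 4.123 * (π + Real.arcsin (1/4)) ≤ Real.sqrt 17 * (π + Real.arcsin (1/4)) := by
    nlinarith
  nlinarith

theorem hFun_attains_interior_max_gt_four :
    ∃ τ₀ ∈ Set.Ioo (0:ℝ) 1,
      (∀ τ ∈ Set.Icc (0:ℝ) 1, hFun τ ≤ hFun τ₀) ∧ 4 < hFun τ₀ := by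
  obtain ⟨τ₀, hmem, hmax⟩ := isCompact_Icc.exists_isMaxOn
    (Set.nonempty_Icc.mpr (by norm_num : (0:ℝ) ≤ 1)) hFun_continuous.continuousOn
  have hmax' : ∀ τ ∈ Set.Icc (0:ℝ) 1, hFun τ ≤ hFun τ₀ := fun τ hτ => hmax hτ
  have hgt : 4 < hFun τ₀ :=
    lt_of_lt_of_le key_quarter (hmax' (1/4) (by norm_num))
  have h0 : hFun 0 = 4 := by
    unfold hFun
    norm_num [Real.sqrt_one, Real.arctan_one, Real.arcsin_zero]
    rw [show π/2 - π/4 = π/4 by ring, div_eq_iff (by positivity : (π/4:ℝ) ≠ 0)]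
    ring
  have h1 : hFun 1 ≤ 4 := by
    unfold hFun
    norm_num [Real.arcsin_one, Real.arctan_zero]
    have hπ : (0:ℝ) < π := Real.pi_pos
    have e : Real.sqrt 2 * (π + π/2) / (π/2) = 3 * Real.sqrt 2 := by
      field_simp; ring
    rw [e]
    have h2 : Real.sqrt 2 < 5/3 := by
      nlinarith [Real.sq_sqrt (show (0:ℝ) ≤ 2 by norm_num), Real.sqrt_nonneg 2]
    linarith
  refine ⟨τ₀, ⟨?_, ?_⟩, hmax', hgt⟩
  · have hne : τ₀ ≠ 0 := by rintro rfl; rw [h0] at hgt; norm_num at hgt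
    exact lt_of_le_of_ne hmem.1 (Ne.symm hne)
  · have hne : τ₀ ≠ 1 := by rintro rfl; linarith
    exact lt_of_le_of_ne hmem.2 hne
end

section
/- Let h : [0,1] → ℝ be defined by h(τ) = √(1+τ²)·(π + arcsin τ)/(π/2 − arctan(√(1−τ²)/√(1+τ²))) − τ, and let h₀ = sup_{τ∈[0,1]} h(τ). Then 4 < h₀ < 4.6 ; equivalently, there exists τ ∈ [0,1] with h(τ) > 4, and h(τ) < 4.6 for every τ ∈ [0,1]. -/
open Real Set

set_option maxHeartbeats 2000000

/-- The sharp constant `h₀ = sup_{τ ∈ [0,1]} h(τ)`. -/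
noncomputable def hZero : ℝ := sSup (hFun '' Set.Icc 0 1)

lemma arctan_nonneg' {x : ℝ} (hx : 0 ≤ x) : 0 ≤ Real.arctan x := by
  have := Real.arctan_strictMono.monotone hx
  simpa [Real.arctan_zero] using this

lemma arctan_le_self' {x : ℝ} (hx : 0 ≤ x) : Real.arctan x ≤ x := by
  calc Real.arctan x ≤ Real.tan (Real.arctan x) :=
        Real.le_tan (arctan_nonneg' hx) (Real.arctan_lt_pi_div_two x)
    _ = x := Real.tan_arctan x

/-- Tangent line bound for arctan at 1. -/
lemma arctan_tangent {y : ℝ} (hy : 1 ≤ y) : Real.arctan y ≤ π/4 + (y - 1)/2 := by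
  have hy0 : (0:ℝ) < 1 + y := by linarith
  set z : ℝ := (y - 1)/(1 + y) with hz
  have hz0 : 0 ≤ z := div_nonneg (by linarith) (by linarith)
  have hz1 : z < 1 := by rw [hz, div_lt_one hy0]; linarith
  have hadd := Real.arctan_add (x := z) (y := 1) (by nlinarith)
  have hzy : (z + 1)/(1 - z*1) = y := by
    rw [hz]; field_simp; ring
  rw [hzy, Real.arctan_one] at hadd
  have h1 : Real.arctan z ≤ z := arctan_le_self' hz0
  have h2 : z ≤ (y - 1)/2 := by
    rw [hz]
    apply div_le_div_of_nonneg_left (by linarith) (by norm_num) (by linarith)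
  linarith

/-- Quintic upper bound for arctan on `[0, ∞)`. -/
lemma arctan_quintic {x : ℝ} (hx : 0 ≤ x) : Real.arctan x ≤ x - x^3/3 + x^5/5 := by
  have hder : ∀ t : ℝ, HasDerivAt (fun t : ℝ => t - t^3/3 + t^5/5 - Real.arctan t)
      (t^6/(1+t^2)) t := by
    intro t
    have h1 : HasDerivAt (fun t : ℝ => t - t^3/3 + t^5/5 - Real.arctan t)
        (1 - ((3:ℕ) * t^2)/3 + ((5:ℕ) * t^4)/5 - 1/(1+t^2)) t := by
      exact (((hasDerivAt_id t).sub ((hasDerivAt_pow 3 t).div_const 3)).add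
        ((hasDerivAt_pow 5 t).div_const 5)).sub (Real.hasDerivAt_arctan t)
    convert h1 using 1
    have h2 : (1:ℝ) + t^2 ≠ 0 := by positivity
    field_simp
    ring
  have mono : MonotoneOn (fun t : ℝ => t - t^3/3 + t^5/5 - Real.arctan t) (Set.Ici 0) := by
    apply monotoneOn_of_deriv_nonneg (convex_Ici 0)
    · exact Continuous.continuousOn (by continuity)
    · intro t _
      exact (hder t).differentiableAt.differentiableWithinAt
    · intro t _
      rw [(hder t).deriv]
      positivity
  have h0 := mono Set.self_mem_Ici (Set.mem_Ici.2 hx) hx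
  simp only [Real.arctan_zero] at h0
  norm_num at h0
  linarith

/-- Monotonicity of the quintic on `[0,1]`. -/
lemma quintic_mono {x q : ℝ} (hx0 : 0 ≤ x) (hxq : x ≤ q) (hq1 : q ≤ 1) :
    x - x^3/3 + x^5/5 ≤ q - q^3/3 + q^5/5 := by
  have hq0 : 0 ≤ q := hx0.trans hxq
  have hbr : 0 ≤ 1 - (q^2 + q*x + x^2)/3 + (q^4 + q^3*x + q^2*x^2 + q*x^3 + x^4)/5 := by
    nlinarith [mul_nonneg hx0 hq0, sq_nonneg x, sq_nonneg q,
      mul_nonneg (mul_nonneg hq0 hq0) (mul_nonneg hq0 hq0),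
      mul_nonneg (mul_nonneg hq0 hq0) (mul_nonneg hq0 hx0),
      mul_nonneg (mul_nonneg hq0 hq0) (mul_nonneg hx0 hx0),
      mul_nonneg (mul_nonneg hq0 hx0) (mul_nonneg hx0 hx0),
      mul_nonneg (mul_nonneg hx0 hx0) (mul_nonneg hx0 hx0)]
  nlinarith [mul_nonneg (sub_nonneg.2 hxq) hbr]

/-- Generic cell verification. -/
lemma cell (a b q s x : ℝ) (ha0 : 0 ≤ a) (hb1 : b ≤ 1) (hq0 : 0 ≤ q) (hq1 : q ≤ 1)
    (hq : 1 - a^2 ≤ q^2 * (1 + a^2))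
    (hkey : 3.141592*(1+b^2/2)*(1+b/2) ≤ (4.58+a)*(3.141592/2 - (q - q^3/3 + q^5/5)))
    (hsa : a ≤ s) (hsb : s ≤ b) (hx0 : 0 ≤ x) (hx1 : x ≤ 1)
    (hcon : x^2*(1+s^2) = 1 - s^2) :
    (1 + s^2/2) * ((3.141592:ℝ) + 3.141592/2*s) ≤
      (4.58 + s) * (3.141592/2 - x + x^3/3 - x^5/5) := by
  have hs0 : 0 ≤ s := ha0.trans hsa
  have hb0 : 0 ≤ b := hs0.trans hsb
  have hss : a^2 ≤ s^2 := by nlinarith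
  have h2 : x^2 ≤ q^2 := by nlinarith [mul_nonneg (sq_nonneg x) (sub_nonneg.2 hss)]
  have hxq : x ≤ q := by nlinarith [h2, mul_nonneg hx0 hq0]
  have hfq : x - x^3/3 + x^5/5 ≤ q - q^3/3 + q^5/5 := quintic_mono hx0 hxq hq1
  have hpos : (0:ℝ) ≤ 3.141592/2 - (q - q^3/3 + q^5/5) := by
    nlinarith [hkey, mul_nonneg hb0 hb0, mul_nonneg (mul_nonneg hb0 hb0) hb0]
  have hposx : (0:ℝ) ≤ 3.141592/2 - (x - x^3/3 + x^5/5) := by linarith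
  have h1 : (1 + s^2/2) * ((3.141592:ℝ) + 3.141592/2*s) ≤ 3.141592*(1+b^2/2)*(1+b/2) := by
    nlinarith [mul_nonneg (sub_nonneg.2 hsb) hs0, sq_nonneg (b - s),
      mul_nonneg (sub_nonneg.2 hsb) (mul_nonneg hs0 hs0),
      mul_nonneg (mul_nonneg (sub_nonneg.2 hsb) hs0) hs0]
  have h3 : (4.58+a)*(3.141592/2 - (q - q^3/3 + q^5/5)) ≤
      (4.58 + s) * (3.141592/2 - x + x^3/3 - x^5/5) := by
    nlinarith [mul_nonneg (sub_nonneg.2 hsa) hposx,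
      mul_nonneg (by linarith : (0:ℝ) ≤ 4.58 + a) (sub_nonneg.2 hfq)]
  linarith

lemma keyQ (s x : ℝ) (hs0 : 0 ≤ s) (hs1 : s ≤ 1) (hx0 : 0 ≤ x) (hx1 : x ≤ 1)
    (hcon : x^2*(1+s^2) = 1 - s^2) :
    (1 + s^2/2) * ((3.141592:ℝ) + 3.141592/2*s) ≤
      (4.58 + s) * (3.141592/2 - x + x^3/3 - x^5/5) := by
  rcases le_total s (1/20) with h0 | h0
  · exact cell (0) (1/20) (1) s x (by norm_num) (by norm_num) (by norm_num) (by norm_num) (by norm_num) (by norm_num) hs0 h0 hx0 hx1 hcon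
  rcases le_total s (19/250) with h1 | h1
  · exact cell (1/20) (19/250) (1247/1250) s x (by norm_num) (by norm_num) (by norm_num) (by norm_num) (by norm_num) (by norm_num) h0 h1 hx0 hx1 hcon
  rcases le_total s (47/500) with h2 | h2
  · exact cell (19/250) (47/500) (9943/10000) s x (by norm_num) (by norm_num) (by norm_num) (by norm_num) (by norm_num) (by norm_num) h1 h2 hx0 hx1 hcon
  rcases le_total s (27/250) with h3 | h3
  · exact cell (47/500) (27/250) (9913/10000) s x (by norm_num) (by norm_num) (by norm_num) (by norm_num) (by norm_num) (by norm_num) h2 h3 hx0 hx1 hcon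
  rcases le_total s (3/25) with h4 | h4
  · exact cell (27/250) (3/25) (1977/2000) s x (by norm_num) (by norm_num) (by norm_num) (by norm_num) (by norm_num) (by norm_num) h3 h4 hx0 hx1 hcon
  rcases le_total s (13/100) with h5 | h5
  · exact cell (3/25) (13/100) (4929/5000) s x (by norm_num) (by norm_num) (by norm_num) (by norm_num) (by norm_num) (by norm_num) h4 h5 hx0 hx1 hcon
  rcases le_total s (139/1000) with h6 | h6
  · exact cell (13/100) (139/1000) (9833/10000) s x (by norm_num) (by norm_num) (by norm_num) (by norm_num) (by norm_num) (by norm_num) h5 h6 hx0 hx1 hcon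
  rcases le_total s (37/250) with h7 | h7
  · exact cell (139/1000) (37/250) (9809/10000) s x (by norm_num) (by norm_num) (by norm_num) (by norm_num) (by norm_num) (by norm_num) h6 h7 hx0 hx1 hcon
  rcases le_total s (39/250) with h8 | h8
  · exact cell (37/250) (39/250) (1223/1250) s x (by norm_num) (by norm_num) (by norm_num) (by norm_num) (by norm_num) (by norm_num) h7 h8 hx0 hx1 hcon
  rcases le_total s (41/250) with h9 | h9
  · exact cell (39/250) (41/250) (122/125) s x (by norm_num) (by norm_num) (by norm_num) (by norm_num) (by norm_num) (by norm_num) h8 h9 hx0 hx1 hcon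
  rcases le_total s (43/250) with h10 | h10
  · exact cell (41/250) (43/250) (1947/2000) s x (by norm_num) (by norm_num) (by norm_num) (by norm_num) (by norm_num) (by norm_num) h9 h10 hx0 hx1 hcon
  rcases le_total s (9/50) with h11 | h11
  · exact cell (43/250) (9/50) (9709/10000) s x (by norm_num) (by norm_num) (by norm_num) (by norm_num) (by norm_num) (by norm_num) h10 h11 hx0 hx1 hcon
  rcases le_total s (47/250) with h12 | h12
  · exact cell (9/50) (47/250) (4841/5000) s x (by norm_num) (by norm_num) (by norm_num) (by norm_num) (by norm_num) (by norm_num) h11 h12 hx0 hx1 hcon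
  rcases le_total s (49/250) with h13 | h13
  · exact cell (47/250) (49/250) (9653/10000) s x (by norm_num) (by norm_num) (by norm_num) (by norm_num) (by norm_num) (by norm_num) h12 h13 hx0 hx1 hcon
  rcases le_total s (41/200) with h14 | h14
  · exact cell (49/250) (41/200) (9623/10000) s x (by norm_num) (by norm_num) (by norm_num) (by norm_num) (by norm_num) (by norm_num) h13 h14 hx0 hx1 hcon
  rcases le_total s (107/500) with h15 | h15
  · exact cell (41/200) (107/500) (9589/10000) s x (by norm_num) (by norm_num) (by norm_num) (by norm_num) (by norm_num) (by norm_num) h14 h15 hx0 hx1 hcon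
  rcases le_total s (223/1000) with h16 | h16
  · exact cell (107/500) (223/1000) (9553/10000) s x (by norm_num) (by norm_num) (by norm_num) (by norm_num) (by norm_num) (by norm_num) h15 h16 hx0 hx1 hcon
  rcases le_total s (233/1000) with h17 | h17
  · exact cell (223/1000) (233/1000) (1903/2000) s x (by norm_num) (by norm_num) (by norm_num) (by norm_num) (by norm_num) (by norm_num) h16 h17 hx0 hx1 hcon
  rcases le_total s (61/250) with h18 | h18
  · exact cell (233/1000) (61/250) (592/625) s x (by norm_num) (by norm_num) (by norm_num) (by norm_num) (by norm_num) (by norm_num) h17 h18 hx0 hx1 hcon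
  rcases le_total s (32/125) with h19 | h19
  · exact cell (61/250) (32/125) (4711/5000) s x (by norm_num) (by norm_num) (by norm_num) (by norm_num) (by norm_num) (by norm_num) h18 h19 hx0 hx1 hcon
  rcases le_total s (269/1000) with h20 | h20
  · exact cell (32/125) (269/1000) (1873/2000) s x (by norm_num) (by norm_num) (by norm_num) (by norm_num) (by norm_num) (by norm_num) h19 h20 hx0 hx1 hcon
  rcases le_total s (283/1000) with h21 | h21
  · exact cell (269/1000) (283/1000) (9301/10000) s x (by norm_num) (by norm_num) (by norm_num) (by norm_num) (by norm_num) (by norm_num) h20 h21 hx0 hx1 hcon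
  rcases le_total s (299/1000) with h22 | h22
  · exact cell (283/1000) (299/1000) (9229/10000) s x (by norm_num) (by norm_num) (by norm_num) (by norm_num) (by norm_num) (by norm_num) h21 h22 hx0 hx1 hcon
  rcases le_total s (317/1000) with h23 | h23
  · exact cell (299/1000) (317/1000) (9143/10000) s x (by norm_num) (by norm_num) (by norm_num) (by norm_num) (by norm_num) (by norm_num) h22 h23 hx0 hx1 hcon
  rcases le_total s (337/1000) with h24 | h24
  · exact cell (317/1000) (337/1000) (9041/10000) s x (by norm_num) (by norm_num) (by norm_num) (by norm_num) (by norm_num) (by norm_num) h23 h24 hx0 hx1 hcon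
  rcases le_total s (359/1000) with h25 | h25
  · exact cell (337/1000) (359/1000) (8923/10000) s x (by norm_num) (by norm_num) (by norm_num) (by norm_num) (by norm_num) (by norm_num) h24 h25 hx0 hx1 hcon
  rcases le_total s (383/1000) with h26 | h26
  · exact cell (359/1000) (383/1000) (1757/2000) s x (by norm_num) (by norm_num) (by norm_num) (by norm_num) (by norm_num) (by norm_num) h25 h26 hx0 hx1 hcon
  rcases le_total s (409/1000) with h27 | h27
  · exact cell (383/1000) (409/1000) (8627/10000) s x (by norm_num) (by norm_num) (by norm_num) (by norm_num) (by norm_num) (by norm_num) h26 h27 hx0 hx1 hcon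
  rcases le_total s (437/1000) with h28 | h28
  · exact cell (409/1000) (437/1000) (8447/10000) s x (by norm_num) (by norm_num) (by norm_num) (by norm_num) (by norm_num) (by norm_num) h27 h28 hx0 hx1 hcon
  rcases le_total s (467/1000) with h29 | h29
  · exact cell (437/1000) (467/1000) (4121/5000) s x (by norm_num) (by norm_num) (by norm_num) (by norm_num) (by norm_num) (by norm_num) h28 h29 hx0 hx1 hcon
  rcases le_total s (499/1000) with h30 | h30
  · exact cell (467/1000) (499/1000) (2003/2500) s x (by norm_num) (by norm_num) (by norm_num) (by norm_num) (by norm_num) (by norm_num) h29 h30 hx0 hx1 hcon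
  rcases le_total s (133/250) with h31 | h31
  · exact cell (499/1000) (133/250) (1551/2000) s x (by norm_num) (by norm_num) (by norm_num) (by norm_num) (by norm_num) (by norm_num) h30 h31 hx0 hx1 hcon
  rcases le_total s (567/1000) with h32 | h32
  · exact cell (133/250) (567/1000) (1869/2500) s x (by norm_num) (by norm_num) (by norm_num) (by norm_num) (by norm_num) (by norm_num) h31 h32 hx0 hx1 hcon
  rcases le_total s (603/1000) with h33 | h33
  · exact cell (567/1000) (603/1000) (3583/5000) s x (by norm_num) (by norm_num) (by norm_num) (by norm_num) (by norm_num) (by norm_num) h32 h33 hx0 hx1 hcon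
  rcases le_total s (16/25) with h34 | h34
  · exact cell (603/1000) (16/25) (427/625) s x (by norm_num) (by norm_num) (by norm_num) (by norm_num) (by norm_num) (by norm_num) h33 h34 hx0 hx1 hcon
  rcases le_total s (339/500) with h35 | h35
  · exact cell (16/25) (339/500) (809/1250) s x (by norm_num) (by norm_num) (by norm_num) (by norm_num) (by norm_num) (by norm_num) h34 h35 hx0 hx1 hcon
  rcases le_total s (717/1000) with h36 | h36
  · exact cell (339/500) (717/1000) (1217/2000) s x (by norm_num) (by norm_num) (by norm_num) (by norm_num) (by norm_num) (by norm_num) h35 h36 hx0 hx1 hcon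
  rcases le_total s (379/500) with h37 | h37
  · exact cell (717/1000) (379/500) (2833/5000) s x (by norm_num) (by norm_num) (by norm_num) (by norm_num) (by norm_num) (by norm_num) h36 h37 hx0 hx1 hcon
  rcases le_total s (401/500) with h38 | h38
  · exact cell (379/500) (401/500) (5199/10000) s x (by norm_num) (by norm_num) (by norm_num) (by norm_num) (by norm_num) (by norm_num) h37 h38 hx0 hx1 hcon
  rcases le_total s (851/1000) with h39 | h39
  · exact cell (401/500) (851/1000) (233/500) s x (by norm_num) (by norm_num) (by norm_num) (by norm_num) (by norm_num) (by norm_num) h38 h39 hx0 hx1 hcon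
  rcases le_total s (909/1000) with h40 | h40
  · exact cell (851/1000) (909/1000) (2/5) s x (by norm_num) (by norm_num) (by norm_num) (by norm_num) (by norm_num) (by norm_num) h39 h40 hx0 hx1 hcon
  rcases le_total s (987/1000) with h41 | h41
  · exact cell (909/1000) (987/1000) (617/2000) s x (by norm_num) (by norm_num) (by norm_num) (by norm_num) (by norm_num) (by norm_num) h40 h41 hx0 hx1 hcon
  exact cell (987/1000) (1) (143/1250) s x (by norm_num) (by norm_num) (by norm_num) (by norm_num) (by norm_num) (by norm_num) h41 hs1 hx0 hx1 hcon

lemma hFun_le (τ : ℝ) (hτ : τ ∈ Set.Icc (0:ℝ) 1) : hFun τ ≤ 4.58 := by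
  obtain ⟨ht0, ht1⟩ := hτ
  have h1p : (0:ℝ) < 1 + τ^2 := by positivity
  have h1m : (0:ℝ) ≤ 1 - τ^2 := by nlinarith
  set x : ℝ := Real.sqrt (1 - τ^2) / Real.sqrt (1 + τ^2) with hxdef
  have hsp : (0:ℝ) < Real.sqrt (1 + τ^2) := Real.sqrt_pos.2 h1p
  have hx0 : 0 ≤ x := div_nonneg (Real.sqrt_nonneg _) (Real.sqrt_nonneg _)
  have hcon : x^2*(1+τ^2) = 1 - τ^2 := by
    have hx2 : x^2 = (1-τ^2)/(1+τ^2) := by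
      rw [hxdef, div_pow, Real.sq_sqrt h1m, Real.sq_sqrt h1p.le]
    rw [hx2]; field_simp
  have hx1 : x ≤ 1 := by nlinarith [hcon, sq_nonneg τ, sq_nonneg (x*τ)]
  have harc : Real.arctan x ≤ x - x^3/3 + x^5/5 := arctan_quintic hx0
  have hD : 0 < π/2 - Real.arctan x := by linarith [Real.arctan_lt_pi_div_two x]
  have hsqrt : Real.sqrt (1 + τ^2) ≤ 1 + τ^2/2 := by
    rw [show (1 + τ^2/2 : ℝ) = Real.sqrt ((1+τ^2/2)^2) from (Real.sqrt_sq (by positivity)).symm]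
    exact Real.sqrt_le_sqrt (by nlinarith)
  have hπ := Real.pi_gt_d6
  have hπ' := Real.pi_lt_d2
  have harcsin : Real.arcsin τ ≤ π/2 * τ := by
    rw [Real.arcsin_le_iff_le_sin ⟨by linarith, ht1⟩
      ⟨by nlinarith, by nlinarith⟩]
    exact Real.le_sin_mul ht0 ht1
  have hNub : Real.sqrt (1+τ^2) * (π + Real.arcsin τ) ≤ (1+τ^2/2) * (π + π/2*τ) := by
    have hnn : 0 ≤ π + Real.arcsin τ := by
      have := Real.arcsin_nonneg.2 ht0
      linarith
    apply mul_le_mul hsqrt (by linarith) hnn (by positivity)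
  have hcoef : (1+τ^2/2)*(1+τ/2) - (4.58+τ)/2 ≤ 0 := by nlinarith
  have hlin : (1+τ^2/2)*(π + π/2*τ) - (4.58+τ)*(π/2) ≤
      (1+τ^2/2)*((3.141592:ℝ) + 3.141592/2*τ) - (4.58+τ)*(3.141592/2) := by
    have h := mul_le_mul_of_nonpos_right (le_of_lt hπ) hcoef
    nlinarith [h]
  have hQ := keyQ τ x ht0 ht1 hx0 hx1 hcon
  have hmul := mul_le_mul_of_nonneg_left harc (show (0:ℝ) ≤ 4.58+τ by linarith)
  have hmain : Real.sqrt (1+τ^2) * (π + Real.arcsin τ) ≤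
      (4.58+τ) * (π/2 - Real.arctan x) := by nlinarith [hNub, hlin, hQ, hmul]
  have hgoal : Real.sqrt (1+τ^2) * (π + Real.arcsin τ) / (π/2 - Real.arctan x) ≤ 4.58 + τ := by
    rw [div_le_iff₀ hD]
    nlinarith [hmain]
  simp only [hFun]
  rw [← hxdef]
  linarith

lemma hFun_lower : 4 < hFun (1/4 : ℝ) := by
  have e17 : ((1:ℝ) + (1/4)^2) = 17/16 := by norm_num
  have e15 : ((1:ℝ) - (1/4)^2) = 15/16 := by norm_num
  have hu : (0:ℝ) < Real.sqrt (15/16) := Real.sqrt_pos.2 (by norm_num)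
  have hv : (0:ℝ) < Real.sqrt (17/16) := Real.sqrt_pos.2 (by norm_num)
  have hu2 : (Real.sqrt (15/16))^2 = 15/16 := Real.sq_sqrt (by norm_num)
  have hv2 : (Real.sqrt (17/16))^2 = 17/16 := Real.sq_sqrt (by norm_num)
  set u := Real.sqrt (15/16)
  set v := Real.sqrt (17/16)
  have hxpos : 0 < u / v := div_pos hu hv
  have hinv : (u/v)⁻¹ = v/u := by rw [inv_div]
  have hDeq : π/2 - Real.arctan (u/v) = Real.arctan (v/u) := by
    rw [← hinv, Real.arctan_inv_of_pos hxpos]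
  have hy2 : (v/u)^2 = 17/15 := by
    rw [div_pow, hu2, hv2]; norm_num
  have hy0 : 0 < v/u := div_pos hv hu
  have hy1 : 1 ≤ v/u := by nlinarith [hy2]
  have hyub : v/u ≤ 1.0646 := by nlinarith [hy2]
  have hDub : Real.arctan (v/u) ≤ π/4 + 0.0323 := by
    have := arctan_tangent hy1
    linarith
  have hDpos : 0 < π/2 - Real.arctan (u/v) := by
    rw [hDeq]
    calc (0:ℝ) = Real.arctan 0 := by rw [Real.arctan_zero]
      _ < Real.arctan (v/u) := Real.arctan_strictMono hy0
  have hvlb : (1.0307:ℝ) ≤ v := by nlinarith [hv2, hv.le]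
  have harcsin : (1/4:ℝ) ≤ Real.arcsin (1/4) := by
    have h1 : Real.sin (Real.arcsin (1/4)) = 1/4 := Real.sin_arcsin (by norm_num) (by norm_num)
    have h2 : Real.sin (Real.arcsin (1/4)) ≤ Real.arcsin (1/4) :=
      Real.sin_le (Real.arcsin_nonneg.2 (by norm_num))
    linarith
  have hπ := Real.pi_gt_d6
  have hπ' := Real.pi_lt_d2
  have hN : (1.0307:ℝ) * (π + 1/4) ≤ v * (π + Real.arcsin (1/4)) := by
    apply mul_le_mul hvlb (by linarith) (by linarith) (by linarith)
  have hfinal : (4 + 1/4) * (π/2 - Real.arctan (u/v)) < v * (π + Real.arcsin (1/4)) := by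
    rw [hDeq]
    calc (4 + 1/4 : ℝ) * Real.arctan (v/u) ≤ (4 + 1/4) * (π/4 + 0.0323) := by
          nlinarith [hDub]
      _ < 1.0307 * (π + 1/4) := by nlinarith
      _ ≤ v * (π + Real.arcsin (1/4)) := hN
  simp only [hFun, e17, e15]
  rw [lt_sub_iff_add_lt, lt_div_iff₀ hDpos]
  linarith [hfinal]

theorem hZero_bounds :
    (4 < hZero ∧ hZero < 4.6) ∧
      (∃ τ ∈ Set.Icc (0:ℝ) 1, 4 < hFun τ) ∧
      (∀ τ ∈ Set.Icc (0:ℝ) 1, hFun τ < 4.6) := by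
  have hub : ∀ y ∈ hFun '' Set.Icc (0:ℝ) 1, y ≤ 4.58 := by
    rintro y ⟨τ, hτ, rfl⟩
    exact hFun_le τ hτ
  have hbdd : BddAbove (hFun '' Set.Icc (0:ℝ) 1) := ⟨4.58, hub⟩
  have hmem : (1/4:ℝ) ∈ Set.Icc (0:ℝ) 1 := by norm_num
  have hne : (hFun '' Set.Icc (0:ℝ) 1).Nonempty := ⟨hFun (1/4), Set.mem_image_of_mem _ hmem⟩
  have h1 : 4 < hZero := by
    have := le_csSup hbdd (Set.mem_image_of_mem hFun hmem)
    have := hFun_lower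
    rw [hZero]
    linarith
  have h2 : hZero ≤ 4.58 := csSup_le hne hub
  refine ⟨⟨h1, by norm_num at h2 ⊢; linarith⟩, ⟨1/4, hmem, hFun_lower⟩, ?_⟩
  intro τ hτ
  have := hFun_le τ hτ
  norm_num at this ⊢
  linarith
end

section
/- Let L be a real number with 0 < L < 2π, let n ≥ 1, and let l₁ ≤ l₂ ≤ … ≤ lₙ be nonnegative real numbers with l₁ + l₂ + … + lₙ = L. Then Σ_{k=1}^{n} (2π − √(4π² − l_k²)) ≤ 2π − √(4π² − L²), and equality holds if and only if l₁ = … = l_{n−1} = 0 and lₙ = L. -/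
/-!
The function `f t = 2π - √((2π)² - t²)` is strictly convex on `[0, 2π]` (the upper half of a circle
is strictly concave) and vanishes at `0`. For such a function the secant slope `f x / x` increases,
so `f (l k) ≤ (l k / L) f L`; summing over `k` gives `∑ f (l k) ≤ f L`, and equality forces every
`l k` to be an endpoint `0` or `L`, where the secant inequality is an equality; as `l` is monotone,
the single nonzero length is the last one.
-/

open Real Finset

theorem strictConcaveOn_sqrt_sq_sub_sq (R : ℝ) :
    StrictConcaveOn ℝ (Set.Icc (-R) R) fun t => √(R ^ 2 - t ^ 2) := by
  have hsq : StrictConcaveOn ℝ (Set.Icc (-R) R) fun t : ℝ => R ^ 2 - t ^ 2 :=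
    (((Even.strictConvexOn_pow even_two two_ne_zero).subset (Set.subset_univ _)
      (convex_Icc _ _)).neg.add_const (R ^ 2)).congr fun t _ => by simp [sub_eq_neg_add]
  have himage : (fun t : ℝ => R ^ 2 - t ^ 2) '' Set.Icc (-R) R ⊆ Set.Ici 0 := by
    rintro _ ⟨t, ht, rfl⟩
    exact sub_nonneg.2 (sq_le_sq' ht.1 ht.2)
  have hconvex : Convex ℝ ((fun t : ℝ => R ^ 2 - t ^ 2) '' Set.Icc (-R) R) :=
    (isPreconnected_Icc.image _ (by fun_prop)).convex
  exact (strictConcaveOn_sqrt.concaveOn.subset himage hconvex).comp_strictConcaveOn hsq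
    (strictMonoOn_sqrt.mono himage)

section ConvexVanishingAtZero

variable {f : ℝ → ℝ} {L x : ℝ}

theorem ConvexOn.le_mul_div_of_map_zero (hf : ConvexOn ℝ (Set.Icc 0 L) f) (hf0 : f 0 = 0)
    (hx : x ∈ Set.Icc 0 L) : f x ≤ x * (f L / L) := by
  rcases hx.1.eq_or_lt with rfl | hx0
  · simp [hf0]
  have hL : L ∈ Set.Icc 0 L := ⟨hx.1.trans hx.2, le_rfl⟩
  have h0 : (0 : ℝ) ∈ Set.Icc 0 L := ⟨le_rfl, hL.1⟩
  have hslope := hf.secant_mono h0 hx hL hx0.ne' (hx0.trans_le hx.2).ne' hx.2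
  simp only [hf0, sub_zero] at hslope
  rwa [div_le_iff₀ hx0, mul_comm] at hslope

theorem StrictConvexOn.lt_mul_div_of_map_zero (hf : StrictConvexOn ℝ (Set.Icc 0 L) f)
    (hf0 : f 0 = 0) (hx : x ∈ Set.Ioo 0 L) : f x < x * (f L / L) := by
  have hL : L ∈ Set.Icc 0 L := ⟨hx.1.le.trans hx.2.le, le_rfl⟩
  have h0 : (0 : ℝ) ∈ Set.Icc 0 L := ⟨le_rfl, hL.1⟩
  have hslope := hf.secant_strict_mono h0 (Set.Ioo_subset_Icc_self hx) hL hx.1.ne'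
    (hx.1.trans hx.2).ne' hx.2
  simp only [hf0, sub_zero] at hslope
  rwa [div_lt_iff₀ hx.1, mul_comm] at hslope

variable {ι : Type*} {s : Finset ι} {l : ι → ℝ}

theorem ConvexOn.sum_map_le_map_sum (hf : ConvexOn ℝ (Set.Icc 0 (∑ i ∈ s, l i)) f)
    (hf0 : f 0 = 0) (hl : ∀ i ∈ s, 0 ≤ l i) : ∑ i ∈ s, f (l i) ≤ f (∑ i ∈ s, l i) := by
  have hmem : ∀ i ∈ s, l i ∈ Set.Icc 0 (∑ j ∈ s, l j) := fun i hi =>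
    ⟨hl i hi, single_le_sum hl hi⟩
  calc ∑ i ∈ s, f (l i) ≤ ∑ i ∈ s, l i * (f (∑ j ∈ s, l j) / ∑ j ∈ s, l j) :=
        sum_le_sum fun i hi => hf.le_mul_div_of_map_zero hf0 (hmem i hi)
    _ = f (∑ i ∈ s, l i) := by
        rw [← sum_mul]
        rcases eq_or_ne (∑ i ∈ s, l i) 0 with h | h
        · simp [h, hf0]
        · exact mul_div_cancel₀ _ h

theorem StrictConvexOn.eq_zero_or_eq_sum_of_sum_map_eq
    (hf : StrictConvexOn ℝ (Set.Icc 0 (∑ i ∈ s, l i)) f) (hf0 : f 0 = 0)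
    (hl : ∀ i ∈ s, 0 ≤ l i) (heq : ∑ i ∈ s, f (l i) = f (∑ i ∈ s, l i)) :
    ∀ i ∈ s, l i = 0 ∨ l i = ∑ j ∈ s, l j := by
  by_contra! ⟨i, hi, hi0, hiL⟩
  have hmem : ∀ j ∈ s, l j ∈ Set.Icc 0 (∑ k ∈ s, l k) := fun j hj =>
    ⟨hl j hj, single_le_sum hl hj⟩
  have hiIoo : l i ∈ Set.Ioo 0 (∑ k ∈ s, l k) :=
    ⟨(hl i hi).lt_of_ne' hi0, (hmem i hi).2.lt_of_ne hiL⟩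
  have hL : ∑ k ∈ s, l k ≠ 0 := (hiIoo.1.trans hiIoo.2).ne'
  have hlt : ∑ j ∈ s, f (l j) < ∑ j ∈ s, l j * (f (∑ k ∈ s, l k) / ∑ k ∈ s, l k) :=
    sum_lt_sum (fun j hj => hf.convexOn.le_mul_div_of_map_zero hf0 (hmem j hj))
      ⟨i, hi, hf.lt_mul_div_of_map_zero hf0 hiIoo⟩
  rw [← sum_mul, mul_div_cancel₀ _ hL] at hlt
  exact hlt.ne heq

end ConvexVanishingAtZero

theorem apply_eq_zero_of_apply_eq_sum {ι : Type*} [Fintype ι] {l : ι → ℝ} (hl : ∀ k, 0 ≤ l k)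
    {i j : ι} (hi : l i = ∑ k, l k) (hji : j ≠ i) : l j = 0 := by
  classical
  have hrest : ∑ k ∈ univ.erase i, l k = 0 := by
    linarith [add_sum_erase univ l (mem_univ i)]
  exact (sum_eq_zero_iff_of_nonneg fun k _ => hl k).1 hrest j (mem_erase.2 ⟨hji, mem_univ j⟩)

theorem superadditivity_extre (n : ℕ) (L : ℝ) (hL0 : 0 < L) (hL : L < 2 * π)
    (l : Fin (n + 1) → ℝ) (hmono : Monotone l) (hnonneg : ∀ k, 0 ≤ l k)
    (hsum : ∑ k, l k = L) :
    (∑ k, (2 * π - Real.sqrt ((2 * π)^2 - (l k)^2))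
        ≤ 2 * π - Real.sqrt ((2 * π)^2 - L^2)) ∧
      ((∑ k, (2 * π - Real.sqrt ((2 * π)^2 - (l k)^2))
          = 2 * π - Real.sqrt ((2 * π)^2 - L^2)) ↔
        (∀ k : Fin (n + 1), k ≠ Fin.last n → l k = 0) ∧ l (Fin.last n) = L) := by
  subst hsum
  set f : ℝ → ℝ := fun t => 2 * π - √((2 * π) ^ 2 - t ^ 2)
  have hf : StrictConvexOn ℝ (Set.Icc 0 (∑ k, l k)) f :=
    ((convexOn_const _ (convex_Icc _ _)).sub_strictConcaveOn
      (strictConcaveOn_sqrt_sq_sub_sq (2 * π))).subset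
      (Set.Icc_subset_Icc (by linarith [pi_pos]) hL.le) (convex_Icc _ _)
  have hf0 : f 0 = 0 := by simp [f, sqrt_sq two_pi_pos.le]
  refine ⟨hf.convexOn.sum_map_le_map_sum hf0 fun k _ => hnonneg k, fun heq => ?_, ?_⟩
  · have hdich := hf.eq_zero_or_eq_sum_of_sum_map_eq hf0 (fun k _ => hnonneg k) heq
    have hlast : l (Fin.last n) = ∑ k, l k := by
      refine (hdich _ (mem_univ _)).resolve_left fun h0 => hL0.not_ge ?_
      exact sum_nonpos fun k _ => h0 ▸ hmono (Fin.le_last k)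
    exact ⟨fun k hk => apply_eq_zero_of_apply_eq_sum hnonneg hlast hk, hlast⟩
  · rintro ⟨hzero, hlast⟩
    rw [Fintype.sum_eq_single (Fin.last n) fun k hk => by rw [hzero k hk]; exact hf0, hlast]
end

section
/- Work in ℝ³ (EuclideanSpace ℝ (Fin 3)). Let u, v be orthonormal unit vectors, let ℓ be a real number with π ≤ ℓ < 2π, and let Γ : [0,ℓ] → ℝ³ be the great-circle arc Γ(t) = (cos t)·u + (sin t)·v. Let q₀ be a unit vector not contained in the image Γ([0,ℓ]). Then arccos⟨q₀, Γ(0)⟩ < π, arccos⟨q₀, Γ(ℓ)⟩ < π, and arccos⟨q₀, Γ(0)⟩ + arccos⟨q₀, Γ(ℓ)⟩ ≤ ℓ. -/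
open Real Set
open scoped RealInnerProductSpace

private lemma arccos_antitone {x y : ℝ} (h : x ≤ y) :
    Real.arccos y ≤ Real.arccos x := by
  unfold Real.arccos
  have := Real.monotone_arcsin h
  linarith

/-- Spherical triangle inequality for unit vectors. -/
private lemma sph_triangle (a b c : EuclideanSpace ℝ (Fin 3))
    (ha : ‖a‖ = 1) (hb : ‖b‖ = 1) (hc : ‖c‖ = 1) :
    Real.arccos ⟪a, c⟫ ≤ Real.arccos ⟪a, b⟫ + Real.arccos ⟪b, c⟫ := by
  set α := Real.arccos ⟪a, b⟫ with hα
  set β := Real.arccos ⟪b, c⟫ with hβ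
  by_cases hcase : π ≤ α + β
  · exact le_trans (Real.arccos_le_pi _) hcase
  push_neg at hcase
  have hab : |⟪a, b⟫| ≤ 1 := by
    have := abs_real_inner_le_norm a b; rwa [ha, hb, one_mul] at this
  have hbc : |⟪b, c⟫| ≤ 1 := by
    have := abs_real_inner_le_norm b c; rwa [hb, hc, one_mul] at this
  have hab1 := abs_le.mp hab
  have hbc1 := abs_le.mp hbc
  have hcosα : Real.cos α = ⟪a, b⟫ := Real.cos_arccos hab1.1 hab1.2
  have hcosβ : Real.cos β = ⟪b, c⟫ := Real.cos_arccos hbc1.1 hbc1.2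
  have hsinα : Real.sin α = Real.sqrt (1 - ⟪a, b⟫ ^ 2) := Real.sin_arccos _
  have hsinβ : Real.sin β = Real.sqrt (1 - ⟪b, c⟫ ^ 2) := Real.sin_arccos _
  -- norms of the orthogonal components
  have hna : ‖a - ⟪a, b⟫ • b‖ = Real.sin α := by
    rw [hsinα]
    rw [show (1 : ℝ) - ⟪a, b⟫ ^ 2 = ‖a - ⟪a, b⟫ • b‖ ^ 2 by
      rw [@norm_sub_sq_real]
      rw [real_inner_smul_right, norm_smul]
      simp [ha, hb, real_inner_self_eq_norm_sq]
      ring]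
    exact (Real.sqrt_sq (norm_nonneg _)).symm
  have hnc : ‖c - ⟪b, c⟫ • b‖ = Real.sin β := by
    rw [hsinβ]
    rw [show (1 : ℝ) - ⟪b, c⟫ ^ 2 = ‖c - ⟪b, c⟫ • b‖ ^ 2 by
      rw [@norm_sub_sq_real]
      rw [real_inner_smul_right, norm_smul, real_inner_comm c b]
      simp [hc, hb, real_inner_self_eq_norm_sq]
      ring]
    exact (Real.sqrt_sq (norm_nonneg _)).symm
  -- Cauchy–Schwarz lower bound
  have hCS : -(‖a - ⟪a, b⟫ • b‖ * ‖c - ⟪b, c⟫ • b‖) ≤ ⟪a - ⟪a, b⟫ • b, c - ⟪b, c⟫ • b⟫ := by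
    have := abs_real_inner_le_norm (a - ⟪a, b⟫ • b) (c - ⟪b, c⟫ • b)
    have h2 := abs_le.mp this
    linarith [h2.1]
  have hexp : ⟪a - ⟪a, b⟫ • b, c - ⟪b, c⟫ • b⟫ = ⟪a, c⟫ - ⟪a, b⟫ * ⟪b, c⟫ := by
    have hbb : ⟪b, b⟫ = 1 := by
      rw [real_inner_self_eq_norm_sq, hb]; norm_num
    simp only [inner_sub_left, inner_sub_right, real_inner_smul_left,
      real_inner_smul_right, real_inner_comm b a, hbb]
    ring
  have hkey : Real.cos (α + β) ≤ ⟪a, c⟫ := by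
    rw [Real.cos_add, hcosα, hcosβ]
    rw [hna, hnc, hexp] at hCS
    linarith
  calc Real.arccos ⟪a, c⟫ ≤ Real.arccos (Real.cos (α + β)) := arccos_antitone hkey
    _ = α + β := Real.arccos_cos (add_nonneg (Real.arccos_nonneg _) (Real.arccos_nonneg _)) hcase.le

private lemma inner_gt_neg_one (x y : EuclideanSpace ℝ (Fin 3))
    (hx : ‖x‖ = 1) (hy : ‖y‖ = 1) (hxy : x ≠ -y) : -1 < ⟪x, y⟫ := by
  have hab : |⟪x, y⟫| ≤ 1 := by
    have := abs_real_inner_le_norm x y; rwa [hx, hy, one_mul] at this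
  rcases lt_or_eq_of_le (abs_le.mp hab).1 with h | h
  · exact h
  · exfalso
    apply hxy
    have : ⟪x, -y⟫ = 1 := by rw [inner_neg_right, ← h]; ring
    have hny : ‖-y‖ = 1 := by rwa [norm_neg]
    exact (inner_eq_one_iff_of_norm_eq_one hx hny).mp this

theorem pre_large (u v : EuclideanSpace ℝ (Fin 3))
    (hu : ‖u‖ = 1) (hv : ‖v‖ = 1) (huv : ⟪u, v⟫ = 0)
    (ℓ : ℝ) (hℓ₁ : π ≤ ℓ) (hℓ₂ : ℓ < 2 * π)
    (Γ : ℝ → EuclideanSpace ℝ (Fin 3))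
    (hΓ : ∀ t, Γ t = Real.cos t • u + Real.sin t • v)
    (q₀ : EuclideanSpace ℝ (Fin 3)) (hq₀ : ‖q₀‖ = 1)
    (hq₀' : q₀ ∉ Γ '' Set.Icc 0 ℓ) :
    Real.arccos ⟪q₀, Γ 0⟫ < π ∧ Real.arccos ⟪q₀, Γ ℓ⟫ < π ∧
      Real.arccos ⟪q₀, Γ 0⟫ + Real.arccos ⟪q₀, Γ ℓ⟫ ≤ ℓ := by
  have hpi := Real.pi_pos
  have hΓ0 : Γ 0 = u := by rw [hΓ]; simp
  have hΓπ : Γ π = -u := by rw [hΓ]; simp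
  have hΓnorm : ∀ t, ‖Γ t‖ = 1 := by
    intro t
    rw [hΓ]
    have : ‖Real.cos t • u + Real.sin t • v‖ ^ 2 = 1 := by
      rw [@norm_add_sq_real, real_inner_smul_left, real_inner_smul_right,
        norm_smul, norm_smul, huv, hu, hv]
      have := Real.sin_sq_add_cos_sq t
      simp only [Real.norm_eq_abs, mul_one, mul_zero]
      nlinarith [sq_abs (Real.cos t), sq_abs (Real.sin t)]
    nlinarith [norm_nonneg (Real.cos t • u + Real.sin t • v)]
  have hΓanti : Γ (ℓ - π) = -Γ ℓ := by
    rw [hΓ, hΓ, Real.cos_sub, Real.sin_sub]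
    simp
    module
  -- q₀ is not the antipode of Γ 0
  have h0mem : Γ π ∈ Γ '' Set.Icc 0 ℓ := ⟨π, ⟨hpi.le, hℓ₁⟩, rfl⟩
  have hℓmem : Γ (ℓ - π) ∈ Γ '' Set.Icc 0 ℓ := ⟨ℓ - π, ⟨by linarith, by linarith⟩, rfl⟩
  have hne0 : q₀ ≠ -Γ 0 := by
    intro h; apply hq₀'; rw [h, hΓ0, ← hΓπ]; exact h0mem
  have hneℓ : q₀ ≠ -Γ ℓ := by
    intro h; apply hq₀'; rw [h, ← hΓanti]; exact hℓmem
  have hgt0 : -1 < ⟪q₀, Γ 0⟫ := inner_gt_neg_one _ _ hq₀ (hΓnorm 0) hne0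
  have hgtℓ : -1 < ⟪q₀, Γ ℓ⟫ := inner_gt_neg_one _ _ hq₀ (hΓnorm ℓ) hneℓ
  have hlt : ∀ x : ℝ, -1 < x → Real.arccos x < π := by
    intro x hx
    rcases lt_or_eq_of_le (Real.arccos_le_pi x) with h | h
    · exact h
    · exfalso
      by_cases hx1 : x ≤ 1
      · have := Real.cos_arccos hx.le hx1
        rw [h, Real.cos_pi] at this
        linarith
      · push_neg at hx1
        have : Real.arccos x ≤ Real.arccos 1 := arccos_antitone hx1.le
        rw [Real.arccos_one] at this
        linarith [h ▸ this]
  refine ⟨hlt _ hgt0, hlt _ hgtℓ, ?_⟩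
  -- triangle inequality via the antipode Γ π = -(Γ 0)
  have htri := sph_triangle q₀ (Γ π) (Γ ℓ) hq₀ (hΓnorm π) (hΓnorm ℓ)
  have h1 : ⟪q₀, Γ π⟫ = -⟪q₀, Γ 0⟫ := by
    rw [hΓπ, hΓ0, inner_neg_right]
  have h2 : Real.arccos ⟪q₀, Γ π⟫ = π - Real.arccos ⟪q₀, Γ 0⟫ := by
    rw [h1, Real.arccos_neg]
  have h3 : ⟪Γ π, Γ ℓ⟫ = Real.cos (ℓ - π) := by
    rw [hΓπ, hΓ]
    have huu : ⟪u, u⟫ = 1 := by rw [real_inner_self_eq_norm_sq, hu]; norm_num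
    rw [inner_neg_left, inner_add_right, real_inner_smul_right, real_inner_smul_right,
      huv, huu, Real.cos_sub]
    simp
  have h4 : Real.arccos ⟪Γ π, Γ ℓ⟫ = ℓ - π := by
    rw [h3, Real.arccos_cos (by linarith) (by linarith)]
  rw [h2, h4] at htri
  linarith
end

section
/- Let h : [0,1] → ℝ be defined by h(τ) = √(1+τ²)·(π + arcsin τ)/(π/2 − arctan(√(1−τ²)/√(1+τ²))) − τ. Then h has right-hand derivative 4/π − 1 at τ = 0; that is, h has derivative 4/π − 1 at 0 within the set [0,1], and in particular this one-sided derivative is positive. -/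
/-!
Both `√(1 ± τ²)` are stationary at `τ = 0`, hence so is their ratio (value `1`) and with it the
denominator `π/2 - arctan(…)`, whose value there is `π/4`. Only `arcsin τ` in the numerator
moves to first order, giving `h'(0) = 1 / (π/4) - 1 = 4/π - 1`, which is positive as `π < 4`.
-/

open Real Set

theorem HasDerivAt.sqrt_of_hasDerivAt_zero {f : ℝ → ℝ} {x : ℝ} (hf : HasDerivAt f 0 x)
    (hx : f x ≠ 0) : HasDerivAt (fun y => √(f y)) 0 x := by
  simpa using hf.sqrt hx

theorem HasDerivAt.div_of_hasDerivAt_zero {c d : ℝ → ℝ} {c' x : ℝ} (hc : HasDerivAt c c' x)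
    (hd : HasDerivAt d 0 x) (hx : d x ≠ 0) :
    HasDerivAt (fun y => c y / d y) (c' / d x) x := by
  have hquot := hc.fun_div hd hx
  rwa [mul_zero, sub_zero, sq, mul_div_mul_right _ _ hx] at hquot

theorem hasDerivAt_sqrt_one_add_sq_zero : HasDerivAt (fun τ : ℝ => √(1 + τ ^ 2)) 0 0 :=
  ((hasDerivAt_pow 2 (0 : ℝ)).const_add 1 |>.congr_deriv (by norm_num)).sqrt_of_hasDerivAt_zero
    (by norm_num)

theorem hasDerivAt_sqrt_one_sub_sq_zero : HasDerivAt (fun τ : ℝ => √(1 - τ ^ 2)) 0 0 :=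
  ((hasDerivAt_pow 2 (0 : ℝ)).const_sub 1 |>.congr_deriv (by norm_num)).sqrt_of_hasDerivAt_zero
    (by norm_num)

theorem hasDerivAt_arccot_sqrt_ratio_zero :
    HasDerivAt (fun τ : ℝ => π / 2 - arctan (√(1 - τ ^ 2) / √(1 + τ ^ 2))) 0 0 := by
  have hratio : HasDerivAt (fun τ : ℝ => √(1 - τ ^ 2) / √(1 + τ ^ 2)) 0 0 := by
    simpa using hasDerivAt_sqrt_one_sub_sq_zero.div_of_hasDerivAt_zero
      hasDerivAt_sqrt_one_add_sq_zero (by norm_num)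
  simpa using hratio.arctan.const_sub (π / 2)

theorem arccot_sqrt_ratio_zero :
    π / 2 - arctan (√(1 - (0 : ℝ) ^ 2) / √(1 + (0 : ℝ) ^ 2)) = π / 4 := by
  norm_num [arctan_one]
  ring

theorem hasDerivAt_hFun_zero : HasDerivAt hFun (4 / π - 1) 0 := by
  have hnum : HasDerivAt (fun τ : ℝ => √(1 + τ ^ 2) * (π + arcsin τ)) 1 0 := by
    have harcsin : HasDerivAt arcsin 1 0 := by
      simpa using hasDerivAt_arcsin (x := 0) (by norm_num) (by norm_num)
    simpa using hasDerivAt_sqrt_one_add_sq_zero.fun_mul (harcsin.const_add π)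
  have hquot := hnum.div_of_hasDerivAt_zero hasDerivAt_arccot_sqrt_ratio_zero
    (by rw [arccot_sqrt_ratio_zero]; positivity)
  rw [arccot_sqrt_ratio_zero, one_div_div] at hquot
  exact hquot.fun_sub (hasDerivAt_id' 0)

theorem hFun_right_derivative_at_zero :
    HasDerivWithinAt hFun (4 / π - 1) (Set.Icc (0:ℝ) 1) 0 ∧ 0 < 4 / π - 1 :=
  ⟨hasDerivAt_hFun_zero.hasDerivWithinAt,
    sub_pos.mpr ((one_lt_div pi_pos).mpr pi_lt_four)⟩
end
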